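/- Kernel of horizontalisation: for 0 ≤ q ≤ n, the space of contact q-forms C^1Λ^q_r = {α ∈ Λ^q_r : (j_r L)*α = 0 for every n-dimensional submanifold L ⊂ E} equals ker h^{0,q}; and for q > n, C^1Λ^q_r = Λ^q_r (every q-form with q > n is contact). -/

import Mathlib

open scoped ContDiff



/-- Multi-indices in `n` variables of total degree at most `r`. -/
abbrev MIdx (n r : ℕ) : Type := {σ : Fin n → Fin (r + 1) // ∑ i, (σ i : ℕ) ≤ r}

/-- The local model of the jet space `J^r(E,n)`: coordinates `(x^λ, u^i_σ)`, `|σ| ≤ r`. -/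
abbrev JetSp (n m r : ℕ) : Type := (Fin n → ℝ) × ((Fin m × MIdx n r) → ℝ)

/-- Partial derivative in the `i`-th coordinate direction. -/
noncomputable def pd {n : ℕ} (i : Fin n) (g : (Fin n → ℝ) → ℝ) : (Fin n → ℝ) → ℝ :=
  fun x => fderiv ℝ g x (Pi.single i 1)

/-- Iterated partial derivative `D_σ` for a multi-index `σ`. -/
noncomputable def pdMulti {n : ℕ} (σ : Fin n → ℕ) (g : (Fin n → ℝ) → ℝ) :
    (Fin n → ℝ) → ℝ :=
  (List.finRange n).foldr (fun i h => (pd i)^[σ i] h) g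

/-- The `r`-th prolongation `j_r f` of `f : ℝⁿ → ℝᵐ`: `u^i_σ ∘ j_r f = ∂^σ f^i`. -/
noncomputable def prolong (n m r : ℕ) (f : (Fin n → ℝ) → (Fin m → ℝ)) :
    (Fin n → ℝ) → JetSp n m r :=
  fun x => (x, fun p => pdMulti (fun i => (p.2.1 i : ℕ)) (fun y => f y p.1) x)

/-- `σ, λ`: add `1` to the multi-index `σ` in slot `lam`. -/
def MIdx.addOne {n r : ℕ} (σ : MIdx n r) (lam : Fin n) : MIdx n (r + 1) :=
  ⟨fun i => ⟨(σ.1 i : ℕ) + (if i = lam then 1 else 0), by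
      have := (σ.1 i).isLt; split <;> omega⟩, by
    show ∑ i, ((σ.1 i : ℕ) + (if i = lam then 1 else 0)) ≤ r + 1
    have hσ := σ.2
    rw [Finset.sum_add_distrib]
    simp
    omega⟩

/-- A multi-index of degree `≤ r` viewed as one of degree `≤ r+1`. -/
def MIdx.lift {n r : ℕ} (σ : MIdx n r) : MIdx n (r + 1) :=
  ⟨fun i => ⟨(σ.1 i : ℕ), by have := (σ.1 i).isLt; omega⟩, by
    show ∑ i, ((σ.1 i : ℕ)) ≤ r + 1
    exact le_trans σ.2 (Nat.le_succ r)⟩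

/-- The projection `π_{r+1,r}` in the local model. -/
def jetProj (n m r : ℕ) : JetSp n m (r + 1) → JetSp n m r :=
  fun ξ => (ξ.1, fun p => ξ.2 (p.1, p.2.lift))

/-- The value at `ξ ∈ J^{r+1}` of the pseudo-horizontal inclusion `D^{r+1}`: the linear map
`ℝⁿ → T J^r` sending `∂/∂x^λ ↦ ∂/∂x^λ + u^i_{σ,λ}(ξ) ∂/∂u^i_σ`. -/
noncomputable def Dmap (n m r : ℕ) (ξ : JetSp n m (r + 1)) :
    (Fin n → ℝ) →ₗ[ℝ] JetSp n m r :=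
  LinearMap.prod LinearMap.id
    (LinearMap.pi fun p : Fin m × MIdx n r =>
      ∑ lam : Fin n, ξ.2 (p.1, p.2.addOne lam) • LinearMap.proj lam)

/-- Horizontalisation `h^{0,q}`: `h^{0,q}(α)(ξ) = α(π_{r+1,r} ξ) ∘ D^{r+1}(ξ)`. -/
noncomputable def horiz (n m r q : ℕ)
    (α : JetSp n m r → (JetSp n m r [⋀^Fin q]→ₗ[ℝ] ℝ)) :
    JetSp n m (r + 1) → ((Fin n → ℝ) [⋀^Fin q]→ₗ[ℝ] ℝ) :=
  fun ξ => (α (jetProj n m r ξ)).compLinearMap (Dmap n m r ξ)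

/-- The pullback `(j_r f)^* α` along the prolongation of `f`, at `x`. -/
noncomputable def pullbackProlong (n m r q : ℕ)
    (α : JetSp n m r → (JetSp n m r [⋀^Fin q]→ₗ[ℝ] ℝ))
    (f : (Fin n → ℝ) → (Fin m → ℝ)) (x : Fin n → ℝ) :
    (Fin n → ℝ) [⋀^Fin q]→ₗ[ℝ] ℝ :=
  (α (prolong n m r f x)).compLinearMap (fderiv ℝ (prolong n m r f) x).toLinearMap


/-- A `q`-form `α` on `J^r(E,n)` is a *contact form* if it pulls back to zero along the
prolongation of every `n`-dimensional submanifold (locally, the graph of any smooth map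
`f : ℝⁿ → ℝᵐ`). -/
def IsContactForm (n m r q : ℕ)
    (α : JetSp n m r → (JetSp n m r [⋀^Fin q]→ₗ[ℝ] ℝ)) : Prop :=
  ∀ f : (Fin n → ℝ) → (Fin m → ℝ), ContDiff ℝ (⊤ : ℕ∞) f →
    ∀ x : Fin n → ℝ, pullbackProlong n m r q α f x = 0

lemma infty_add_one : (∞ : WithTop ℕ∞) + 1 = ∞ := by rfl

lemma one_le_infty : (1 : WithTop ℕ∞) ≤ ∞ := by exact_mod_cast le_top

lemma contDiff_pd {n : ℕ} (i : Fin n) {g : (Fin n → ℝ) → ℝ} (hg : ContDiff ℝ ∞ g) :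
    ContDiff ℝ ∞ (pd i g) :=
  ((hg.fderiv_right infty_add_one.le).clm_apply contDiff_const)

lemma contDiff_pd_iter {n : ℕ} (i : Fin n) (k : ℕ) {g : (Fin n → ℝ) → ℝ}
    (hg : ContDiff ℝ ∞ g) : ContDiff ℝ ∞ ((pd i)^[k] g) := by
  induction k with
  | zero => exact hg
  | succ k ih => rw [Function.iterate_succ_apply']; exact contDiff_pd i ih

lemma contDiff_foldr {n : ℕ} (σ : Fin n → ℕ) (l : List (Fin n)) {g : (Fin n → ℝ) → ℝ}
    (hg : ContDiff ℝ ∞ g) :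
    ContDiff ℝ ∞ (l.foldr (fun i h => (pd i)^[σ i] h) g) := by
  induction l with
  | nil => exact hg
  | cons i t ih => exact contDiff_pd_iter i (σ i) ih

lemma contDiff_pdMulti {n : ℕ} (σ : Fin n → ℕ) {g : (Fin n → ℝ) → ℝ}
    (hg : ContDiff ℝ ∞ g) : ContDiff ℝ ∞ (pdMulti σ g) :=
  contDiff_foldr σ _ hg

-- second derivative applied

lemma pd_eq_snd {n : ℕ} (i j : Fin n) {g : (Fin n → ℝ) → ℝ} (hg : ContDiff ℝ ∞ g)
    (x : Fin n → ℝ) :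
    pd i (pd j g) x = fderiv ℝ (fderiv ℝ g) x (Pi.single i 1) (Pi.single j 1) := by
  have hf : ContDiff ℝ ∞ (fderiv ℝ g) := hg.fderiv_right infty_add_one.le
  have hdiff : DifferentiableAt ℝ (fderiv ℝ g) x :=
    (hf.differentiable (by simp)).differentiableAt
  have : pd j g = fun y => (fderiv ℝ g y) (Pi.single j 1) := rfl
  rw [pd, this, fderiv_clm_apply hdiff (differentiableAt_const _)]
  simp

lemma pd_comm {n : ℕ} (i j : Fin n) {g : (Fin n → ℝ) → ℝ} (hg : ContDiff ℝ ∞ g) :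
    pd i (pd j g) = pd j (pd i g) := by
  funext x
  rw [pd_eq_snd i j hg, pd_eq_snd j i hg]
  exact (hg.contDiffAt.isSymmSndFDerivAt (by rw [minSmoothness_of_isRCLikeNormedField]; norm_cast)).eq _ _

lemma pd_iter_comm {n : ℕ} (i j : Fin n) (k : ℕ) {g : (Fin n → ℝ) → ℝ}
    (hg : ContDiff ℝ ∞ g) : pd i ((pd j)^[k] g) = (pd j)^[k] (pd i g) := by
  induction k generalizing g with
  | zero => rfl
  | succ k ih =>
    rw [Function.iterate_succ_apply', Function.iterate_succ_apply']
    rw [pd_comm i j (contDiff_pd_iter j k hg), ih hg]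

lemma pd_foldr_comm {n : ℕ} (σ : Fin n → ℕ) (lam : Fin n) (l : List (Fin n))
    {g : (Fin n → ℝ) → ℝ} (hg : ContDiff ℝ ∞ g) :
    pd lam (l.foldr (fun i h => (pd i)^[σ i] h) g)
      = l.foldr (fun i h => (pd i)^[σ i] h) (pd lam g) := by
  induction l generalizing g with
  | nil => rfl
  | cons i t ih =>
    simp only [List.foldr_cons]
    rw [pd_iter_comm lam i (σ i) (contDiff_foldr σ t hg), ih hg]

lemma foldr_congr_idx {n : ℕ} (σ τ : Fin n → ℕ) (l : List (Fin n))
    (h : ∀ i ∈ l, τ i = σ i) (g : (Fin n → ℝ) → ℝ) :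
    l.foldr (fun i h => (pd i)^[τ i] h) g = l.foldr (fun i h => (pd i)^[σ i] h) g := by
  induction l with
  | nil => rfl
  | cons a t ih =>
    simp only [List.foldr_cons]
    rw [ih (fun i hi => h i (List.mem_cons_of_mem a hi)), h a List.mem_cons_self]

lemma pd_pdMulti {n : ℕ} (σ : Fin n → ℕ) (lam : Fin n) {g : (Fin n → ℝ) → ℝ}
    (hg : ContDiff ℝ ∞ g) :
    pd lam (pdMulti σ g) = pdMulti (fun i => σ i + if i = lam then 1 else 0) g := by
  set τ : Fin n → ℕ := fun i => σ i + if i = lam then 1 else 0 with hτ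
  rw [pdMulti, pd_foldr_comm σ lam _ hg, pdMulti]
  have main : ∀ l : List (Fin n), l.Nodup → lam ∈ l →
      l.foldr (fun i h => (pd i)^[σ i] h) (pd lam g)
        = l.foldr (fun i h => (pd i)^[τ i] h) g := by
    intro l
    induction l with
    | nil => intro _ h; simp at h
    | cons i t ih =>
      intro hnd hmem
      simp only [List.foldr_cons]
      by_cases hi : lam = i
      · subst hi
        have hnot : lam ∉ t := (List.nodup_cons.mp hnd).1
        have h1 : t.foldr (fun i h => (pd i)^[σ i] h) (pd lam g)
            = pd lam (t.foldr (fun i h => (pd i)^[σ i] h) g) :=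
          (pd_foldr_comm σ lam t hg).symm
        have h2 : t.foldr (fun i h => (pd i)^[τ i] h) g
            = t.foldr (fun i h => (pd i)^[σ i] h) g := by
          refine foldr_congr_idx σ τ t (fun j hj => ?_) g
          have : j ≠ lam := fun h => hnot (h ▸ hj)
          simp [hτ, this]
        rw [h1, h2, ← Function.iterate_succ_apply]
        have : τ lam = σ lam + 1 := by simp [hτ]
        rw [this]
      · have hmem' : lam ∈ t := by
          rcases List.mem_cons.mp hmem with h | h
          · exact absurd h.symm (fun hh => hi hh.symm)
          · exact h
        rw [ih (List.nodup_cons.mp hnd).2 hmem']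
        have : τ i = σ i := by simp [hτ, if_neg (fun hh : i = lam => hi hh.symm)]
        rw [this]
  exact main _ (List.nodup_finRange n) (List.mem_finRange lam)

lemma fderiv_apply_eq_sum_pd {n : ℕ} {g : (Fin n → ℝ) → ℝ} {x : Fin n → ℝ}
    (v : Fin n → ℝ) :
    fderiv ℝ g x v = ∑ lam, v lam * pd lam g x := by
  have hv : v = ∑ lam : Fin n, (v lam • (Pi.single lam (1:ℝ) : Fin n → ℝ)) := by
    rw [← Finset.univ_sum_single v]
    congr 1; funext i
    rw [← Pi.single_smul, smul_eq_mul, mul_one, Finset.univ_sum_single]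
  conv_lhs => rw [hv]
  rw [map_sum]
  refine Finset.sum_congr rfl fun lam _ => ?_
  rw [map_smul, smul_eq_mul]; rfl

lemma contDiff_prolong {n m : ℕ} {f : (Fin n → ℝ) → (Fin m → ℝ)}
    (hf : ContDiff ℝ ∞ f) (i : Fin m) (σ : Fin n → ℕ) :
    ContDiff ℝ ∞ (pdMulti σ (fun y => f y i)) :=
  contDiff_pdMulti σ ((contDiff_apply ℝ ℝ i).comp hf)

lemma jetProj_prolong (n m r : ℕ) (f : (Fin n → ℝ) → (Fin m → ℝ)) (x : Fin n → ℝ) :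
    jetProj n m r (prolong n m (r + 1) f x) = prolong n m r f x := rfl

lemma fderiv_prolong {n m : ℕ} (r : ℕ) {f : (Fin n → ℝ) → (Fin m → ℝ)}
    (hf : ContDiff ℝ ∞ f) (x : Fin n → ℝ) (v : Fin n → ℝ) :
    fderiv ℝ (prolong n m r f) x v = Dmap n m r (prolong n m (r + 1) f x) v := by
  set G : (Fin n → ℝ) → ((Fin m × MIdx n r) → ℝ) :=
    fun x => fun p : Fin m × MIdx n r =>
      pdMulti (fun i => (p.2.1 i : ℕ)) (fun y => f y p.1) x with hG
  have hdiff : ∀ p : Fin m × MIdx n r,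
      DifferentiableAt ℝ (fun x => G x p) x := fun p =>
    ((contDiff_prolong hf p.1 _).differentiable (by simp)).differentiableAt
  have hGd : DifferentiableAt ℝ G x := differentiableAt_pi.mpr hdiff
  have h1 : prolong n m r f = fun x => ((x, G x) : JetSp n m r) := rfl
  rw [h1, DifferentiableAt.fderiv_prodMk differentiableAt_fun_id hGd,
    ContinuousLinearMap.prod_apply]
  refine Prod.ext ?_ ?_
  · simp [Dmap]
  · show (fderiv ℝ G x) v = _
    have hGpi : G = fun x => fun p : Fin m × MIdx n r => G x p := rfl
    rw [hGpi, fderiv_pi hdiff]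
    funext p
    show (fderiv ℝ (fun x => G x p) x) v = _
    rw [fderiv_apply_eq_sum_pd v]
    have hval : ∀ lam : Fin n, pd lam (fun x => G x p) x
        = (prolong n m (r+1) f x).2 (p.1, p.2.addOne lam) := by
      intro lam
      have hsm : ContDiff ℝ ∞ (fun y : Fin n → ℝ => f y p.1) :=
        (contDiff_apply ℝ ℝ p.1).comp hf
      have := congrFun (pd_pdMulti (fun i => (p.2.1 i : ℕ)) lam hsm) x
      exact this
    have hrhs : Dmap n m r (prolong n m (r+1) f x) v
        = (v, fun p : Fin m × MIdx n r =>
            ∑ lam, (prolong n m (r+1) f x).2 (p.1, p.2.addOne lam) * v lam) := by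
      refine Prod.ext rfl ?_
      funext pp
      simp [Dmap, LinearMap.prod_apply, LinearMap.pi_apply, LinearMap.sum_apply,
        LinearMap.smul_apply, LinearMap.proj_apply, smul_eq_mul]
    rw [hrhs]
    show _ = ∑ lam, (prolong n m (r+1) f x).2 (p.1, p.2.addOne lam) * v lam
    refine Finset.sum_congr rfl fun lam _ => ?_
    rw [hval lam, mul_comm]

lemma pullbackProlong_eq_horiz {n m r q : ℕ}
    (α : JetSp n m r → (JetSp n m r [⋀^Fin q]→ₗ[ℝ] ℝ))
    {f : (Fin n → ℝ) → (Fin m → ℝ)} (hf : ContDiff ℝ ∞ f) (x : Fin n → ℝ) :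
    pullbackProlong n m r q α f x = horiz n m r q α (prolong n m (r + 1) f x) := by
  unfold pullbackProlong horiz
  rw [jetProj_prolong]
  congr 1
  exact LinearMap.ext (fun v => fderiv_prolong r hf x v)

lemma highDegree_contact {n m r q : ℕ} (hq : n < q)
    (α : JetSp n m r → (JetSp n m r [⋀^Fin q]→ₗ[ℝ] ℝ))
    (f : (Fin n → ℝ) → (Fin m → ℝ)) (x : Fin n → ℝ) :
    pullbackProlong n m r q α f x = 0 := by
  ext v
  refine AlternatingMap.map_linearDependent _ v fun hli => ?_
  have := hli.fintype_card_le_finrank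
  rw [Module.finrank_pi ℝ] at this
  simp [Fintype.card_fin] at this
  omega

noncomputable def mono (a : ℝ) (s : ℕ) : ℝ → ℝ := fun t => (t - a) ^ s / (s.factorial : ℝ)

lemma contDiff_mono {N : WithTop ℕ∞} (a : ℝ) (s : ℕ) : ContDiff ℝ N (mono a s) :=
  ((contDiff_id.sub contDiff_const).pow s).div_const _

lemma deriv_mono (a : ℝ) (s : ℕ) : deriv (mono a (s + 1)) = mono a s := by
  funext t
  have h : HasDerivAt (fun t : ℝ => (t - a) ^ (s + 1)) (((s:ℝ) + 1) * (t - a) ^ s * 1) t := by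
    have := ((hasDerivAt_id t).sub_const a).pow (s + 1)
    simpa [Pi.pow_def] using this
  have h2 : HasDerivAt (mono a (s + 1))
      ((((s:ℝ) + 1) * (t - a) ^ s * 1) / ((s + 1).factorial : ℝ)) t := h.div_const _
  rw [h2.deriv, mono]
  rw [Nat.factorial_succ]
  push_cast
  have hs : ((s:ℝ) + 1) ≠ 0 := by positivity
  field_simp

lemma deriv_mono_zero (a : ℝ) : deriv (mono a 0) = 0 := by
  have h : mono a 0 = fun _ => (1:ℝ) := by funext t; simp [mono]
  rw [h]
  funext t
  simp

lemma deriv_iter_zero_fun : ∀ k : ℕ, deriv^[k] (0 : ℝ → ℝ) = 0 := by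
  intro k
  apply Function.iterate_fixed
  funext t
  show deriv (fun _ => (0:ℝ)) t = 0
  simp

lemma deriv_iter_mono (a : ℝ) : ∀ (k s : ℕ),
    deriv^[k] (mono a s) = if k ≤ s then mono a (s - k) else 0
  | 0, s => by simp
  | k + 1, 0 => by
      rw [Function.iterate_succ_apply, deriv_mono_zero, deriv_iter_zero_fun]
      simp
  | k + 1, s + 1 => by
      rw [Function.iterate_succ_apply, deriv_mono, deriv_iter_mono a k s]
      simp [Nat.succ_le_succ_iff, Nat.succ_sub_succ]

lemma deriv_iter_mono_self (a : ℝ) (k s : ℕ) :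
    deriv^[k] (mono a s) a = if k = s then 1 else 0 := by
  rw [deriv_iter_mono]
  by_cases h : k ≤ s
  · rw [if_pos h]
    rcases eq_or_lt_of_le h with rfl | hlt
    · simp [mono]
    · rw [if_neg (Nat.ne_of_lt hlt), mono]
      have : s - k ≠ 0 := by omega
      simp [this]
  · rw [if_neg h, if_neg (by omega : ¬ k = s)]
    rfl

noncomputable def Pc {n : ℕ} (g : Fin n → ℝ → ℝ) : (Fin n → ℝ) → ℝ :=
  fun y => ∏ lam, g lam (y lam)

lemma contDiff_Pc {n : ℕ} {N : WithTop ℕ∞} {g : Fin n → ℝ → ℝ}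
    (hg : ∀ lam, ContDiff ℝ N (g lam)) : ContDiff ℝ N (Pc g) :=
  contDiff_prod fun i _ => (hg i).comp (contDiff_apply ℝ ℝ i)

lemma pd_Pc {n : ℕ} (i : Fin n) {g : Fin n → ℝ → ℝ} (hg : ∀ lam, ContDiff ℝ ∞ (g lam)) :
    pd i (Pc g) = Pc (Function.update g i (deriv (g i))) := by
  funext x
  set φ : Fin n → (Fin n → ℝ) → ℝ := fun lam y => g lam (y lam) with hφ
  have hfac : ∀ lam : Fin n, DifferentiableAt ℝ (φ lam) x :=
    fun lam => (((hg lam).comp (contDiff_apply ℝ ℝ lam)).differentiable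
      (by simp)).differentiableAt
  have hfd : ∀ lam : Fin n, fderiv ℝ (φ lam) x (Pi.single i 1)
      = if lam = i then deriv (g lam) (x lam) else 0 := by
    intro lam
    have hcomp : φ lam
        = (g lam) ∘ (ContinuousLinearMap.proj (R := ℝ) (φ := fun _ : Fin n => ℝ) lam) := rfl
    rw [hcomp, fderiv_comp x ((hg lam).differentiable (by simp)).differentiableAt
      (ContinuousLinearMap.proj lam).differentiableAt]
    simp only [ContinuousLinearMap.fderiv, ContinuousLinearMap.coe_comp',
      Function.comp_apply, ContinuousLinearMap.proj_apply]
    by_cases h : lam = i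
    · rw [if_pos h, h, Pi.single_eq_same]
      rfl
    · rw [if_neg h, Pi.single_eq_of_ne h, map_zero]
  have hPc : Pc g = fun y => ∏ lam ∈ Finset.univ, φ lam y := rfl
  rw [pd, hPc, fderiv_finset_prod (fun lam _ => hfac lam), ContinuousLinearMap.sum_apply]
  rw [Finset.sum_eq_single i]
  · rw [ContinuousLinearMap.smul_apply, hfd i, if_pos rfl, smul_eq_mul]
    have hupd : (fun lam => Function.update g i (deriv (g i)) lam (x lam))
        = Function.update (fun lam => g lam (x lam)) i (deriv (g i) (x i)) := by
      funext lam
      by_cases h : lam = i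
      · subst h; simp
      · simp [Function.update_of_ne h]
    show _ = ∏ lam, Function.update g i (deriv (g i)) lam (x lam)
    rw [hupd, Finset.prod_update_of_mem (Finset.mem_univ i),
      Finset.sdiff_singleton_eq_erase]
    simp only [hφ]
    ring
  · intro lam _ hlam
    rw [ContinuousLinearMap.smul_apply, hfd lam, if_neg hlam, smul_zero]
  · intro h; exact absurd (Finset.mem_univ i) h

lemma pd_iter_Pc {n : ℕ} (i : Fin n) (k : ℕ) {g : Fin n → ℝ → ℝ}
    (hg : ∀ lam, ContDiff ℝ ∞ (g lam)) :
    (pd i)^[k] (Pc g) = Pc (Function.update g i (deriv^[k] (g i))) := by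
  induction k with
  | zero => simp [Function.update_eq_self]
  | succ k ih =>
    have hg' : ∀ lam, ContDiff ℝ ∞ ((Function.update g i (deriv^[k] (g i))) lam) := by
      intro lam
      by_cases h : lam = i
      · subst h; simp only [Function.update_self]; exact (hg _).iterate_deriv k
      · rw [Function.update_of_ne h]; exact hg lam
    rw [Function.iterate_succ_apply', ih, pd_Pc i hg']
    rw [Function.update_idem, Function.update_self, Function.iterate_succ_apply']

lemma foldr_Pc {n : ℕ} (τ : Fin n → ℕ) (l : List (Fin n)) {g : Fin n → ℝ → ℝ}
    (hg : ∀ lam, ContDiff ℝ ∞ (g lam)) :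
    l.foldr (fun i h => (pd i)^[τ i] h) (Pc g)
      = Pc (fun lam => deriv^[l.count lam * τ lam] (g lam)) := by
  induction l with
  | nil => simp
  | cons i t ih =>
    have hgt : ∀ lam, ContDiff ℝ ∞ (deriv^[t.count lam * τ lam] (g lam)) :=
      fun lam => (hg lam).iterate_deriv _
    simp only [List.foldr_cons]
    rw [ih, pd_iter_Pc i (τ i) hgt]
    have hfam : Function.update (fun lam => deriv^[t.count lam * τ lam] (g lam)) i
        (deriv^[τ i] (deriv^[t.count i * τ i] (g i)))
        = fun lam => deriv^[(i :: t).count lam * τ lam] (g lam) := by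
      funext lam
      by_cases h : lam = i
      · subst h
        rw [Function.update_self, ← Function.iterate_add_apply, List.count_cons_self]
        congr 1
        ring
      · rw [Function.update_of_ne h, List.count_cons_of_ne (Ne.symm h)]
    rw [hfam]

lemma pdMulti_Pc {n : ℕ} (τ : Fin n → ℕ) {g : Fin n → ℝ → ℝ}
    (hg : ∀ lam, ContDiff ℝ ∞ (g lam)) :
    pdMulti τ (Pc g) = Pc (fun lam => deriv^[τ lam] (g lam)) := by
  rw [pdMulti, foldr_Pc τ _ hg]
  have : (fun lam => deriv^[(List.finRange n).count lam * τ lam] (g lam))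
      = fun lam => deriv^[τ lam] (g lam) := by
    funext lam
    rw [List.count_eq_one_of_mem (List.nodup_finRange n) (List.mem_finRange lam)]
    congr 1
    ring
  rw [this]

lemma pd_sum {n : ℕ} {ι : Type*} (S : Finset ι) (i : Fin n) (c : ι → ℝ)
    (F : ι → (Fin n → ℝ) → ℝ) (hF : ∀ σ, ContDiff ℝ ∞ (F σ)) :
    pd i (fun y => ∑ σ ∈ S, c σ * F σ y) = fun y => ∑ σ ∈ S, c σ * pd i (F σ) y := by
  funext x
  have hdF : ∀ σ, DifferentiableAt ℝ (F σ) x :=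
    fun σ => ((hF σ).differentiable (by simp)).differentiableAt
  rw [pd, fderiv_fun_sum fun σ _ => (hdF σ).const_mul (c σ), ContinuousLinearMap.sum_apply]
  refine Finset.sum_congr rfl fun σ _ => ?_
  rw [fderiv_const_mul (hdF σ) (c σ), ContinuousLinearMap.smul_apply, smul_eq_mul]
  rfl

lemma pd_iter_sum {n : ℕ} {ι : Type*} (S : Finset ι) (i : Fin n) (k : ℕ) (c : ι → ℝ)
    (F : ι → (Fin n → ℝ) → ℝ) (hF : ∀ σ, ContDiff ℝ ∞ (F σ)) :
    (pd i)^[k] (fun y => ∑ σ ∈ S, c σ * F σ y)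
      = fun y => ∑ σ ∈ S, c σ * (pd i)^[k] (F σ) y := by
  induction k generalizing F with
  | zero => rfl
  | succ k ih =>
    rw [Function.iterate_succ_apply, pd_sum S i c F hF,
      ih (fun σ => pd i (F σ)) (fun σ => contDiff_pd i (hF σ))]
    rfl

lemma foldr_sum {n : ℕ} {ι : Type*} (τ : Fin n → ℕ) (l : List (Fin n)) (S : Finset ι)
    (c : ι → ℝ) (F : ι → (Fin n → ℝ) → ℝ) (hF : ∀ σ, ContDiff ℝ ∞ (F σ)) :
    l.foldr (fun i h => (pd i)^[τ i] h) (fun y => ∑ σ ∈ S, c σ * F σ y)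
      = fun y => ∑ σ ∈ S, c σ * (l.foldr (fun i h => (pd i)^[τ i] h) (F σ)) y := by
  induction l generalizing F with
  | nil => rfl
  | cons i t ih =>
    simp only [List.foldr_cons]
    rw [ih F hF, pd_iter_sum S i (τ i) c _
      (fun σ => contDiff_foldr τ t (hF σ))]

lemma pdMulti_sum {n : ℕ} {ι : Type*} (τ : Fin n → ℕ) (S : Finset ι)
    (c : ι → ℝ) (F : ι → (Fin n → ℝ) → ℝ) (hF : ∀ σ, ContDiff ℝ ∞ (F σ)) :
    pdMulti τ (fun y => ∑ σ ∈ S, c σ * F σ y)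
      = fun y => ∑ σ ∈ S, c σ * pdMulti τ (F σ) y :=
  foldr_sum τ _ S c F hF

lemma exists_prolong (n m r : ℕ) (ξ : JetSp n m (r + 1)) :
    ∃ f : (Fin n → ℝ) → (Fin m → ℝ), ContDiff ℝ (⊤ : ℕ∞) f ∧ prolong n m (r + 1) f ξ.1 = ξ := by
  classical
  set a := ξ.1 with ha
  set f : (Fin n → ℝ) → (Fin m → ℝ) :=
    fun y i => ∑ σ : MIdx n (r + 1), ξ.2 (i, σ)
      * Pc (fun lam => mono (a lam) ((σ.1 lam : ℕ))) y with hf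
  refine ⟨f, ?_, ?_⟩
  · rw [contDiff_pi]
    intro i
    exact ContDiff.sum fun σ _ =>
      contDiff_const.mul (contDiff_Pc fun lam => contDiff_mono _ _)
  · refine Prod.ext rfl ?_
    funext p
    show pdMulti (fun i => (p.2.1 i : ℕ)) (fun y => f y p.1) a = ξ.2 p
    set τ : Fin n → ℕ := fun i => (p.2.1 i : ℕ) with hτ
    have hF : ∀ σ : MIdx n (r + 1),
        ContDiff ℝ ∞ (Pc (fun lam => mono (a lam) ((σ.1 lam : ℕ)))) :=
      fun σ => contDiff_Pc fun lam => contDiff_mono _ _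
    have h1 : (fun y => f y p.1) = fun y => ∑ σ : MIdx n (r + 1), ξ.2 (p.1, σ)
        * Pc (fun lam => mono (a lam) ((σ.1 lam : ℕ))) y := rfl
    have h2 := congrFun (pdMulti_sum τ Finset.univ (fun σ => ξ.2 (p.1, σ))
      (fun σ => Pc (fun lam => mono (a lam) ((σ.1 lam : ℕ)))) hF) a
    rw [h1, h2]
    have hzero : ∀ σ ∈ Finset.univ, σ ≠ p.2 →
        ξ.2 (p.1, σ) * pdMulti τ (Pc (fun lam => mono (a lam) ((σ.1 lam : ℕ)))) a = 0 := by
      intro σ _ hσ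
      rw [pdMulti_Pc τ (fun lam => contDiff_mono _ _)]
      have hex : ∃ lam, τ lam ≠ (σ.1 lam : ℕ) := by
        by_contra hC
        push_neg at hC
        exact hσ (Subtype.ext (funext fun lam =>
          (Fin.val_injective (hC lam)).symm) : σ = p.2)
      obtain ⟨lam, hlam⟩ := hex
      have hz : Pc (fun lam => deriv^[τ lam] (mono (a lam) ((σ.1 lam : ℕ)))) a = 0 :=
        Finset.prod_eq_zero (Finset.mem_univ lam)
          (by show deriv^[τ lam] (mono (a lam) ((σ.1 lam : ℕ))) (a lam) = 0
              rw [deriv_iter_mono_self, if_neg hlam])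
      rw [hz, mul_zero]
    rw [Finset.sum_eq_single p.2 hzero (fun h => absurd (Finset.mem_univ p.2) h)]
    rw [pdMulti_Pc τ (fun lam => contDiff_mono _ _)]
    have hone : Pc (fun lam => deriv^[τ lam] (mono (a lam) ((p.2.1 lam : ℕ)))) a = 1 :=
      Finset.prod_eq_one fun lam _ => by
        show deriv^[τ lam] (mono (a lam) ((p.2.1 lam : ℕ))) (a lam) = 1
        rw [deriv_iter_mono_self, if_pos rfl]
    rw [hone, mul_one]

/-- kernel of horizontalisation.  For `0 ≤ q ≤ n`, the space of contact
`q`-forms `C¹Λ^q_r = {α : (j_r L)^*α = 0 for all L}` equals `ker h^{0,q}`; and for `q > n`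
every `q`-form is contact (`C¹Λ^q_r = Λ^q_r`). -/
theorem contact_forms_eq_ker_horizontalisation (n m r q : ℕ)
    (α : JetSp n m r → (JetSp n m r [⋀^Fin q]→ₗ[ℝ] ℝ)) :
    (q ≤ n → (IsContactForm n m r q α ↔ ∀ ξ, horiz n m r q α ξ = 0)) ∧
      (n < q → IsContactForm n m r q α) := by
  constructor
  · intro _
    constructor
    · intro hc ξ
      obtain ⟨f, hf, hpro⟩ := exists_prolong n m r ξ
      have h0 := hc f hf ξ.1
      rw [pullbackProlong_eq_horiz α (hf.of_le (by simp)) ξ.1, hpro] at h0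
      exact h0
    · intro hk f hf x
      rw [pullbackProlong_eq_horiz α (hf.of_le (by simp)) x, hk]
  · intro hq f _ x
    exact highDegree_contact hq α f x
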